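/- Let b = 3n+1 and θ = (n/(3n+1))π. Then for j ∈ {1,2,3} and k ∈ {0, ..., n-1}, the sign of sin((3k+j)θ) equals (-1)^k, and consequently the continued fraction [1,1,1,-1,-1,-1,...,(-1)^{n+1},(-1)^{n+1},(-1)^{n+1}] (the signs alternating in blocks of three, total length 3n) equals (2n+1)/(2n). -/

import Mathlib

/-- Evaluation of a finite continued fraction `[a₁, a₂, …, aₙ] = a₁ + 1/(a₂ + 1/(⋯ + 1/aₙ))`. -/
def cf : List ℤ → ℚ
  | [] => 0
  | a :: l => a + (cf l)⁻¹

/-! Since `(3k + j) n = k (3n + 1) + (j n - k)` with `0 < j n - k < 3n + 1`, the angle `(3k + j) θ`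
lies strictly between `k π` and `(k + 1) π`. The continued fraction of `n + 1` blocks is `[1, 1, 1]`
followed by the negation of that of `n` blocks, so the reciprocal `r` of its value obeys
`r ↦ 1 / (1 + 1 / (1 + 1 / (1 - r)))`, which sends `2n / (2n + 1)` to `(2n + 2) / (2n + 3)`. -/

open Real

lemma neg_one_pow_mul_sin_pos {x : ℝ} {k : ℕ} (h₁ : k * π < x) (h₂ : x < (k + 1) * π) :
    0 < (-1) ^ k * sin x := by
  have hx : x = (x - k * π) + k * π := by ring
  rw [hx, sin_add_nat_mul_pi, ← mul_assoc, ← mul_pow, neg_one_mul, neg_neg, one_pow, one_mul]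
  exact sin_pos_of_pos_of_lt_pi (by linarith) (by linarith)

lemma neg_one_pow_mul_sin_mul_div_mul_pi_pos {m a b k : ℕ} (h₁ : k * b < m * a)
    (h₂ : m * a < (k + 1) * b) : 0 < (-1) ^ k * sin (m * (a / b * π)) := by
  have hb : (0 : ℝ) < b := by exact_mod_cast Nat.pos_of_ne_zero (by rintro rfl; omega)
  have hx : (m : ℝ) * (a / b * π) = m * a / b * π := by ring
  rw [hx]
  apply neg_one_pow_mul_sin_pos
  · gcongr
    rw [lt_div_iff₀ hb]
    exact_mod_cast h₁
  · gcongr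
    rw [div_lt_iff₀ hb]
    exact_mod_cast h₂

lemma cf_map_neg (l : List ℤ) : cf (l.map Neg.neg) = -cf l := by
  induction l with
  | nil => simp [cf]
  | cons a l ih => simp only [List.map_cons, cf, ih, inv_neg, Int.cast_neg]; ring

def alternatingBlocks (n : ℕ) : List ℤ :=
  (List.range (3 * n)).map fun i => (-1 : ℤ) ^ (i / 3)

lemma alternatingBlocks_succ (n : ℕ) :
    alternatingBlocks (n + 1) = 1 :: 1 :: 1 :: (alternatingBlocks n).map Neg.neg := by
  have hshift : ((fun i => (-1 : ℤ) ^ (i / 3)) ∘ (3 + ·)) =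
      Neg.neg ∘ fun i => (-1 : ℤ) ^ (i / 3) := by
    funext i
    simp [add_comm 3 i, Nat.add_div_right, pow_succ]
  rw [alternatingBlocks, alternatingBlocks, show 3 * (n + 1) = 3 + 3 * n by ring,
    List.range_add, List.map_append, List.map_map, hshift, ← List.map_map]
  rfl

/-- Stated for the reciprocal, which stays free of division by zero at `n = 0`. -/
lemma inv_cf_alternatingBlocks (n : ℕ) :
    (cf (alternatingBlocks n))⁻¹ = 2 * n / (2 * n + 1) := by
  induction n with
  | zero => simp [alternatingBlocks, cf]
  | succ n ih =>
    rw [alternatingBlocks_succ]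
    simp only [cf, cf_map_neg, inv_neg, ih, Int.cast_one]
    push_cast
    have hpos : (2 * n + 1 : ℚ) ≠ 0 := by positivity
    rw [← sub_eq_add_neg, one_sub_div hpos, add_sub_cancel_left, one_div, inv_inv]
    field_simp
    ring

lemma cf_alternatingBlocks (n : ℕ) :
    cf (alternatingBlocks n) = (2 * n + 1) / (2 * n) := by
  rw [← inv_inv (cf _), inv_cf_alternatingBlocks, inv_div]

theorem torus_knot_conway_form_general (n : ℕ) :
    (∀ j ∈ ({1, 2, 3} : Finset ℕ), ∀ k < n,
      0 < (-1 : ℝ) ^ k *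
        Real.sin ((3 * (k : ℝ) + (j : ℝ)) * ((n : ℝ) / (3 * (n : ℝ) + 1) * Real.pi))) ∧
    cf ((List.range (3 * n)).map fun i => (-1 : ℤ) ^ (i / 3)) =
      (2 * (n : ℚ) + 1) / (2 * (n : ℚ)) := by
  refine ⟨fun j hj k hk => ?_, cf_alternatingBlocks n⟩
  have hj : 1 ≤ j ∧ j ≤ 3 := by simp only [Finset.mem_insert, Finset.mem_singleton] at hj; omega
  have h := neg_one_pow_mul_sin_mul_div_mul_pi_pos (m := 3 * k + j) (a := n) (b := 3 * n + 1)
    (k := k) (by nlinarith) (by nlinarith)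
  push_cast at h
  exact h

/-- For `b = 3n+1` and `θ = (n/(3n+1))π`: for `j ∈ {1,2,3}` and `0 ≤ k < n` the sign of
`sin((3k+j)θ)` is `(-1)^k`, and the continued fraction
`[1,1,1,-1,-1,-1,…,(-1)^{n+1},(-1)^{n+1},(-1)^{n+1}]` of length `3n`
(signs alternating in blocks of three) equals `(2n+1)/(2n)`. -/
theorem torus_knot_conway_form (n : ℕ) (hn : 1 ≤ n) :
    (∀ j ∈ ({1, 2, 3} : Finset ℕ), ∀ k < n,
      0 < (-1 : ℝ) ^ k *
        Real.sin ((3 * (k : ℝ) + (j : ℝ)) * ((n : ℝ) / (3 * (n : ℝ) + 1) * Real.pi))) ∧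
    cf ((List.range (3 * n)).map fun i => (-1 : ℤ) ^ (i / 3)) =
      (2 * (n : ℚ) + 1) / (2 * (n : ℚ)) :=
  torus_knot_conway_form_general n
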